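/- In the group presented by generators a, b and the single relator aba(bab)⁻¹ (the braid group on three strands, ⟨a, b | aba = bab⟩), the element a²ba²ba⁻²b⁻¹a⁻²b⁻¹ is equal to the identity. -/
import Mathlib


/-- The relator `aba(bab)⁻¹` of the braid group `B₃ = ⟨a, b | aba = bab⟩`, with `a, b` the
generators `0, 1 : Fin 2`. -/
def braidRels : Set (FreeGroup (Fin 2)) :=
  {FreeGroup.of 0 * FreeGroup.of 1 * FreeGroup.of 0 *
    (FreeGroup.of 1 * FreeGroup.of 0 * FreeGroup.of 1)⁻¹}

lemma braid_key :
    (PresentedGroup.of 0 : PresentedGroup braidRels) * PresentedGroup.of 1 * PresentedGroup.of 0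
      = PresentedGroup.of 1 * PresentedGroup.of 0 * PresentedGroup.of 1 := by
  have h : (PresentedGroup.mk braidRels)
      (FreeGroup.of 0 * FreeGroup.of 1 * FreeGroup.of 0 *
        (FreeGroup.of 1 * FreeGroup.of 0 * FreeGroup.of 1)⁻¹) = 1 := by
    apply (QuotientGroup.eq_one_iff _).mpr
    exact Subgroup.subset_normalClosure rfl
  simp only [map_mul, map_inv] at h
  exact mul_inv_eq_one.mp h

/-- In the braid group `⟨a, b | aba = bab⟩`, the element
`a²ba²ba⁻²b⁻¹a⁻²b⁻¹` is trivial. -/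
theorem stmt_10 :
    (PresentedGroup.of 0 : PresentedGroup braidRels) ^ 2 * PresentedGroup.of 1 *
      PresentedGroup.of 0 ^ 2 * PresentedGroup.of 1 *
      (PresentedGroup.of 0 ^ 2)⁻¹ * (PresentedGroup.of 1)⁻¹ *
      (PresentedGroup.of 0 ^ 2)⁻¹ * (PresentedGroup.of 1)⁻¹ = 1 := by
  set a : PresentedGroup braidRels := PresentedGroup.of 0 with ha
  set b : PresentedGroup braidRels := PresentedGroup.of 1 with hb
  have key : a * b * a = b * a * b := braid_key
  have h1 : a * a * b * a * a * b = b * a * a * b * a * a := by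
    calc a * a * b * a * a * b = a * (a * b * a) * a * b := by group
    _ = a * (b * a * b) * a * b := by rw [key]
    _ = (a * b * a) * (b * a * b) := by group
    _ = (a * b * a) * (a * b * a) := by rw [key]
    _ = (b * a * b) * (a * b * a) := by nth_rewrite 1 [key]; rfl
    _ = b * a * (b * a * b) * a := by group
    _ = b * a * (a * b * a) * a := by rw [key]
    _ = b * a * a * b * a * a := by group
  calc (PresentedGroup.of 0 : PresentedGroup braidRels) ^ 2 * PresentedGroup.of 1 *
      PresentedGroup.of 0 ^ 2 * PresentedGroup.of 1 *
      (PresentedGroup.of 0 ^ 2)⁻¹ * (PresentedGroup.of 1)⁻¹ *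
      (PresentedGroup.of 0 ^ 2)⁻¹ * (PresentedGroup.of 1)⁻¹
      = (a * a * b * a * a * b) * (b * a * a * b * a * a)⁻¹ := by
        simp only [← ha, ← hb, pow_two]; group
    _ = 1 := by rw [h1]; group
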